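/- Proposition A.2(ii) (concentration of the maximum eigenvalue of the sample moment matrix). Fix a category k with n_k i.i.d. observations from the main-effect-free Ising distribution with true parameter θ̄^{(k)}, and assume condition (B): Λ_max(Ū^{(k)}_{S_k,S_k}) ≤ τ_max. Then for any ε > 0, P( Λ_max(Û^{(k)}_{S_k,S_k}) ≥ τ_max + ε ) ≤ 2 exp( −(ε²/2)(n_k/q_k²) + 2 log q_k ). -/

import Mathlib

open Filter Finset Matrix

noncomputable section

/-- Real value of a binary (0/1) observation. -/
def toR (b : Bool) : ℝ := if b then 1 else 0

/-- Index set of pairs (j,j') with j < j'. -/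
abbrev PairIdx (p : ℕ) := {q : Fin p × Fin p // q.1 < q.2}

/-- Symmetric extension of a vector indexed by pairs j < j'. -/
def symExt {p : ℕ} (θ : PairIdx p → ℝ) (j j' : Fin p) : ℝ :=
  if h : j < j' then θ ⟨(j, j'), h⟩ else if h' : j' < j then θ ⟨(j', j), h'⟩ else 0

/-- Energy of the main-effect-free Ising model. -/
def isingEnergy {p : ℕ} (θ : PairIdx p → ℝ) (x : Fin p → Bool) : ℝ :=
  ∑ e : PairIdx p, θ e * toR (x e.1.1) * toR (x e.1.2)

/-- Pmf of the main-effect-free Ising model. -/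
def isingPmf {p : ℕ} (θ : PairIdx p → ℝ) (x : Fin p → Bool) : ℝ :=
  Real.exp (isingEnergy θ x) / ∑ y : Fin p → Bool, Real.exp (isingEnergy θ y)

/-- Energy of the Ising model with main effects, parameter a symmetric matrix. -/
def isingEnergyFull {p : ℕ} (Θ : Matrix (Fin p) (Fin p) ℝ) (x : Fin p → Bool) : ℝ :=
  ∑ j, Θ j j * toR (x j) + ∑ e : PairIdx p, Θ e.1.1 e.1.2 * toR (x e.1.1) * toR (x e.1.2)

/-- Pmf of the Ising model with main effects. -/
def isingPmfFull {p : ℕ} (Θ : Matrix (Fin p) (Fin p) ℝ) (x : Fin p → Bool) : ℝ :=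
  Real.exp (isingEnergyFull Θ x) / ∑ y : Fin p → Bool, Real.exp (isingEnergyFull Θ y)

/-- Local field at node j (no main effects). -/
def localField {p : ℕ} (θ : PairIdx p → ℝ) (x : Fin p → Bool) (j : Fin p) : ℝ :=
  ∑ j' ∈ Finset.univ.erase j, symExt θ j j' * toR (x j')

/-- One-observation pseudo-log-likelihood (no main effects). -/
def pllOne {p : ℕ} (x : Fin p → Bool) (θ : PairIdx p → ℝ) : ℝ :=
  ∑ j, (toR (x j) * localField θ x j - Real.log (1 + Real.exp (localField θ x j)))

/-- Pseudo-log-likelihood of n observations (no main effects). -/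
def pll {p n : ℕ} (x : Fin n → Fin p → Bool) (θ : PairIdx p → ℝ) : ℝ :=
  (n : ℝ)⁻¹ * ∑ i, pllOne (x i) θ

/-- One-observation pseudo-log-likelihood with main effects (matrix parameter). -/
def pllMainOne {p : ℕ} (x : Fin p → Bool) (Θ : Matrix (Fin p) (Fin p) ℝ) : ℝ :=
  ∑ j, (toR (x j) * (Θ j j + ∑ j' ∈ Finset.univ.erase j, Θ j j' * toR (x j'))
    - Real.log (1 + Real.exp (Θ j j + ∑ j' ∈ Finset.univ.erase j, Θ j j' * toR (x j'))))

/-- Pseudo-log-likelihood with main effects of n observations. -/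
def pllMain {p n : ℕ} (x : Fin n → Fin p → Bool) (Θ : Matrix (Fin p) (Fin p) ℝ) : ℝ :=
  (n : ℝ)⁻¹ * ∑ i, pllMainOne (x i) Θ

/-- Entrywise (Schur--Hadamard) product of matrices. -/
def hprod {p : ℕ} (A B : Matrix (Fin p) (Fin p) ℝ) : Matrix (Fin p) (Fin p) ℝ :=
  Matrix.of fun i j => A i j * B i j

/-- Partial derivative of l at θ in coordinate e. -/
def gradAt {p : ℕ} (l : (PairIdx p → ℝ) → ℝ) (θ : PairIdx p → ℝ) (e : PairIdx p) : ℝ :=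
  fderiv ℝ l θ (Pi.single e 1)

/-- Hessian matrix of l at θ. -/
def hessAt {p : ℕ} (l : (PairIdx p → ℝ) → ℝ) (θ : PairIdx p → ℝ) :
    Matrix (PairIdx p) (PairIdx p) ℝ :=
  Matrix.of fun e e' => fderiv ℝ (fun t => fderiv ℝ l t (Pi.single e' 1)) θ (Pi.single e 1)

/-- Design matrix of an observation: column (j,j') has x_{j'} in row j and x_j in row j'. -/
def designMat {p : ℕ} (x : Fin p → Bool) : Matrix (Fin p) (PairIdx p) ℝ :=
  Matrix.of fun j e => if j = e.1.1 then toR (x e.1.2) else if j = e.1.2 then toR (x e.1.1) else 0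

/-- Probability of E under the weight w on a finite sample space. -/
def finProb {Ω : Type*} [Fintype Ω] (w : Ω → ℝ) (E : Set Ω) : ℝ :=
  ∑ ω, Set.indicator E w ω

/-- Euclidean norm. -/
def euclNorm {ι : Type*} [Fintype ι] (v : ι → ℝ) : ℝ := Real.sqrt (∑ i, v i ^ 2)

/-- Sup norm of a vector. -/
def supNorm {ι : Type*} [Fintype ι] (v : ι → ℝ) : ℝ := ⨆ i, |v i|

/-- Smallest eigenvalue of a symmetric matrix, via the Rayleigh quotient. -/
def lamMin {ι : Type*} [Fintype ι] (A : Matrix ι ι ℝ) : ℝ :=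
  ⨅ v : {v : ι → ℝ // ∑ i, v i ^ 2 = 1}, v.1 ⬝ᵥ A.mulVec v.1

/-- Largest eigenvalue of a symmetric matrix, via the Rayleigh quotient. -/
def lamMax {ι : Type*} [Fintype ι] (A : Matrix ι ι ℝ) : ℝ :=
  ⨆ v : {v : ι → ℝ // ∑ i, v i ^ 2 = 1}, v.1 ⬝ᵥ A.mulVec v.1

/-- Maximum absolute row sum norm. -/
def rowSumNorm {ι κ : Type*} [Fintype ι] [Fintype κ] (A : Matrix ι κ ℝ) : ℝ :=
  ⨆ i, ∑ j, |A i j|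

/-- Submatrix with rows in S and columns in T. -/
def subm {ι : Type*} (A : Matrix ι ι ℝ) (S T : Finset ι) : Matrix ↥S ↥T ℝ :=
  A.submatrix (fun i => i.1) (fun j => j.1)

/-- Support of a parameter vector, as a finset of pairs. -/
def suppF {p : ℕ} (θ : PairIdx p → ℝ) : Finset (PairIdx p) :=
  Finset.univ.filter (fun e => θ e ≠ 0)

/-- Union of the supports over the K categories. -/
def unionSupp {p K : ℕ} (θb : Fin K → PairIdx p → ℝ) : Finset (PairIdx p) :=
  Finset.univ.filter (fun e => ∃ k, θb k e ≠ 0)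

/-- Population Fisher information of the pseudo-likelihood. -/
def Qpop {p : ℕ} (θb : PairIdx p → ℝ) : Matrix (PairIdx p) (PairIdx p) ℝ :=
  - ∑ x : Fin p → Bool, isingPmf θb x • hessAt (pllOne x) θb

/-- Sample Fisher information of the pseudo-likelihood at the truth. -/
def Qhat {p n : ℕ} (x : Fin n → Fin p → Bool) (θb : PairIdx p → ℝ) :
    Matrix (PairIdx p) (PairIdx p) ℝ :=
  - hessAt (pll x) θb

/-- Population second-moment matrix of the design matrices. -/
def Upop {p : ℕ} (θb : PairIdx p → ℝ) : Matrix (PairIdx p) (PairIdx p) ℝ :=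
  ∑ x : Fin p → Bool, isingPmf θb x • ((designMat x)ᵀ * designMat x)

/-- Sample second-moment matrix of the design matrices. -/
def Uhat {p n : ℕ} (x : Fin n → Fin p → Bool) : Matrix (PairIdx p) (PairIdx p) ℝ :=
  (n : ℝ)⁻¹ • ∑ i, ((designMat (x i))ᵀ * designMat (x i))

/-- Joint group-penalized pseudo-likelihood criterion F_λ. -/
def jointCrit {p K : ℕ} (nk : Fin K → ℕ) (x : ∀ k, Fin (nk k) → Fin p → Bool) (lam : ℝ)
    (θ : Fin K → PairIdx p → ℝ) : ℝ :=
  ∑ k, pll (x k) (θ k) - lam * ∑ e : PairIdx p, Real.sqrt (∑ k, |θ k e|)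

/-- Product (i.i.d. across observations and categories) weight of a multi-category sample. -/
def prodW {K p : ℕ} (nk : Fin K → ℕ) (θb : Fin K → PairIdx p → ℝ)
    (xs : ∀ k, Fin (nk k) → Fin p → Bool) : ℝ :=
  ∏ k, ∏ i, isingPmf (θb k) (xs k i)

end

/-
If every entry of `Û − Ū` on `S × S` is smaller than `ε / q` in absolute value, then the
Rayleigh quotient of `Û_{S,S} − Ū_{S,S}` is smaller than `(ε / q) · q = ε`, so
`Λ_max(Û_{S,S}) < τ_max + ε`. Hence the event is covered by the `q²` events
`|Û_{e,e'} − Ū_{e,e'}| ≥ ε / q`. Each entry of `𝒳ᵀ𝒳` lies in `[0, 2]` and `Û_{e,e'}` is the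
mean of `n` i.i.d. copies of it, so by Hoeffding's inequality each of these events has
probability at most `2 exp(−n (ε/q)² / 2)`; finally `q² = exp(2 log q)`.
-/

section FiniteProbability

variable {Ω : Type*} [Fintype Ω] {w : Ω → ℝ}

theorem finProb_le_sum_of_subset_iUnion {κ : Type*} [Fintype κ]
    (hw : ∀ ω, 0 ≤ w ω) {E : Set Ω} {A : κ → Set Ω} (hE : E ⊆ ⋃ k, A k) :
    finProb w E ≤ ∑ k, finProb w (A k) := by
  simp only [finProb]
  rw [Finset.sum_comm]
  refine Finset.sum_le_sum fun ω _ => ?_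
  have hA : ∀ k, 0 ≤ (A k).indicator w ω := fun k =>
    Set.indicator_nonneg (fun ω _ => hw ω) ω
  by_cases hω : ω ∈ E
  · obtain ⟨k, hk⟩ := Set.mem_iUnion.mp (hE hω)
    rw [Set.indicator_of_mem hω, ← Set.indicator_of_mem hk w]
    exact Finset.single_le_sum (fun k _ => hA k) (Finset.mem_univ k)
  · rw [Set.indicator_of_notMem hω]
    exact Finset.sum_nonneg fun k _ => hA k

theorem finProb_le_add_of_subset_union
    (hw : ∀ ω, 0 ≤ w ω) {E A B : Set Ω} (hE : E ⊆ A ∪ B) :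
    finProb w E ≤ finProb w A + finProb w B := by
  rw [Set.union_eq_iUnion] at hE
  simpa [Fintype.sum_bool, add_comm] using finProb_le_sum_of_subset_iUnion hw hE

theorem finProb_sum_ge_le_exp_mul_sum_pow {f : Ω → ℝ}
    (hf : ∀ x, 0 ≤ f x) (Y : Ω → ℝ) (n : ℕ) (s : ℝ) {t : ℝ} (ht : 0 ≤ t) :
    finProb (fun xs : Fin n → Ω => ∏ i, f (xs i)) {xs | s ≤ ∑ i, Y (xs i)}
      ≤ Real.exp (-(t * s)) * (∑ x, f x * Real.exp (t * Y x)) ^ n := by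
  have markov : ∀ xs : Fin n → Ω,
      {xs | s ≤ ∑ i, Y (xs i)}.indicator (fun xs => ∏ i, f (xs i)) xs
        ≤ Real.exp (-(t * s)) * ∏ i, (f (xs i) * Real.exp (t * Y (xs i))) := by
    intro xs
    have hprod : 0 ≤ ∏ i, f (xs i) := Finset.prod_nonneg fun i _ => hf _
    rw [Finset.prod_mul_distrib, ← Real.exp_sum, mul_left_comm, ← Real.exp_add,
      ← Finset.mul_sum, Set.indicator_apply]
    split_ifs with hxs
    · have hts : t * s ≤ t * ∑ i, Y (xs i) := mul_le_mul_of_nonneg_left hxs ht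
      exact le_mul_of_one_le_right hprod (Real.one_le_exp (by linarith))
    · positivity
  calc _ ≤ ∑ xs : Fin n → Ω,
        Real.exp (-(t * s)) * ∏ i, (f (xs i) * Real.exp (t * Y (xs i))) :=
        Finset.sum_le_sum fun xs _ => markov xs
    _ = _ := by rw [← Finset.mul_sum, Fintype.sum_pow]

end FiniteProbability

open ProbabilityTheory in
theorem sum_mul_exp_mul_sub_mean_le {ι : Type*} [Fintype ι] {w Z : ι → ℝ}
    (hw0 : ∀ i, 0 ≤ w i) (hw1 : ∑ i, w i = 1) {a b : ℝ} (hZ : ∀ i, Z i ∈ Set.Icc a b)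
    (t : ℝ) :
    ∑ i, w i * Real.exp (t * (Z i - ∑ j, w j * Z j))
      ≤ Real.exp ((b - a) ^ 2 / 8 * t ^ 2) := by
  let _ : MeasurableSpace ι := ⊤
  have hw1' : ∑ i, ENNReal.ofReal (w i) = 1 := by
    rw [← ENNReal.ofReal_sum_of_nonneg fun i _ => hw0 i, hw1, ENNReal.ofReal_one]
  set μ := (PMF.ofFintype _ hw1').toMeasure
  have hint : ∀ g : ι → ℝ, ∫ i, g i ∂μ = ∑ i, w i * g i := fun g => by
    simp [μ, PMF.integral_eq_sum, ENNReal.toReal_ofReal (hw0 _)]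
  have h := (hasSubgaussianMGF_of_mem_Icc (μ := μ) (X := Z)
    (measurable_of_countable Z).aemeasurable (MeasureTheory.ae_of_all _ hZ)).mgf_le t
  rw [mgf, hint, hint] at h
  refine h.trans_eq (congrArg Real.exp ?_)
  simp only [NNReal.coe_pow, NNReal.coe_div, coe_nnnorm, Real.norm_eq_abs, NNReal.coe_ofNat]
  rw [div_pow, sq_abs]
  ring

section Hoeffding

variable {Ω : Type*} [Fintype Ω] {f : Ω → ℝ} {Z : Ω → ℝ} {a b : ℝ}

theorem finProb_mean_sub_ge_le {n : ℕ} (hf0 : ∀ x, 0 ≤ f x) (hf1 : ∑ x, f x = 1)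
    (hab : a < b) (hZ : ∀ x, Z x ∈ Set.Icc a b) (hn : 0 < n) {ε : ℝ} (hε : 0 ≤ ε) :
    finProb (fun xs : Fin n → Ω => ∏ i, f (xs i))
        {xs | ε ≤ (n : ℝ)⁻¹ * ∑ i, Z (xs i) - ∑ x, f x * Z x}
      ≤ Real.exp (-(2 * n * ε ^ 2 / (b - a) ^ 2)) := by
  set m := ∑ x, f x * Z x
  have hn' : (0 : ℝ) < n := Nat.cast_pos.mpr hn
  have hab' : 0 < (b - a) ^ 2 := by nlinarith
  have hevent : {xs : Fin n → Ω | ε ≤ (n : ℝ)⁻¹ * ∑ i, Z (xs i) - m}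
      = {xs | n * ε ≤ ∑ i, (Z (xs i) - m)} := by
    ext xs
    simp only [Set.mem_ofPred_eq, Finset.sum_sub_distrib, Finset.sum_const, Finset.card_univ,
      Fintype.card_fin, nsmul_eq_mul, le_sub_iff_add_le, inv_mul_eq_div, le_div_iff₀ hn']
    constructor <;> intro h <;> linarith
  -- Chernoff at the optimal `t = 4 ε / (b - a) ^ 2`
  set t := 4 * ε / (b - a) ^ 2
  have ht : 0 ≤ t := by positivity
  rw [hevent]
  calc _ ≤ Real.exp (-(t * (n * ε))) * (∑ x, f x * Real.exp (t * (Z x - m))) ^ n :=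
        finProb_sum_ge_le_exp_mul_sum_pow hf0 _ n _ ht
    _ ≤ Real.exp (-(t * (n * ε))) * Real.exp ((b - a) ^ 2 / 8 * t ^ 2) ^ n := by
        gcongr
        · exact Finset.sum_nonneg fun x _ => mul_nonneg (hf0 x) (Real.exp_pos _).le
        · exact sum_mul_exp_mul_sub_mean_le hf0 hf1 hZ t
    _ = _ := by
        rw [← Real.exp_nat_mul, ← Real.exp_add]
        congr 1
        simp only [t]
        field_simp
        ring

theorem finProb_abs_mean_sub_ge_le {n : ℕ} (hf0 : ∀ x, 0 ≤ f x) (hf1 : ∑ x, f x = 1)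
    (hab : a < b) (hZ : ∀ x, Z x ∈ Set.Icc a b) (hn : 0 < n) {ε : ℝ} (hε : 0 ≤ ε) :
    finProb (fun xs : Fin n → Ω => ∏ i, f (xs i))
        {xs | ε ≤ |(n : ℝ)⁻¹ * ∑ i, Z (xs i) - ∑ x, f x * Z x|}
      ≤ 2 * Real.exp (-(2 * n * ε ^ 2 / (b - a) ^ 2)) := by
  have hnegZ : ∀ x, -Z x ∈ Set.Icc (-b) (-a) := fun x =>
    ⟨neg_le_neg (hZ x).2, neg_le_neg (hZ x).1⟩
  have hsplit : {xs : Fin n → Ω | ε ≤ |(n : ℝ)⁻¹ * ∑ i, Z (xs i) - ∑ x, f x * Z x|}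
      ⊆ {xs | ε ≤ (n : ℝ)⁻¹ * ∑ i, Z (xs i) - ∑ x, f x * Z x}
        ∪ {xs | ε ≤ (n : ℝ)⁻¹ * ∑ i, -Z (xs i) - ∑ x, f x * -Z x} := by
    intro xs hxs
    simp only [Set.mem_ofPred_eq, Set.mem_union, le_abs, Finset.sum_neg_distrib, mul_neg] at hxs ⊢
    rcases hxs with h | h
    · exact Or.inl h
    · right; linarith
  refine (finProb_le_add_of_subset_union (fun xs => Finset.prod_nonneg fun i _ => hf0 _)
    hsplit).trans ?_
  rw [two_mul]
  refine add_le_add (finProb_mean_sub_ge_le hf0 hf1 hab hZ hn hε) ?_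
  simpa only [neg_sub_neg] using
    finProb_mean_sub_ge_le hf0 hf1 (neg_lt_neg hab) hnegZ hn hε

end Hoeffding

section RayleighQuotient

variable {ι : Type*} [Fintype ι]

theorem dotProduct_mulVec_le_mul_card {A : Matrix ι ι ℝ} {c : ℝ} (hA : ∀ i j, |A i j| ≤ c)
    {v : ι → ℝ} (hv : ∑ i, v i ^ 2 = 1) : v ⬝ᵥ A *ᵥ v ≤ c * Fintype.card ι := by
  have hne : Nonempty ι := by
    by_contra h
    simp [not_nonempty_iff.mp h] at hv
  have hc : 0 ≤ c := (abs_nonneg _).trans (hA (Classical.arbitrary ι) (Classical.arbitrary ι))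
  have cauchySchwarz : (∑ i, |v i|) ^ 2 ≤ Fintype.card ι := by
    simpa [hv] using sq_sum_le_card_mul_sum_sq (s := Finset.univ) (f := fun i => |v i|)
  calc v ⬝ᵥ A *ᵥ v = ∑ i, ∑ j, v i * A i j * v j := by
        simp only [dotProduct, mulVec, Finset.mul_sum, mul_assoc]
    _ ≤ ∑ i, ∑ j, c * (|v i| * |v j|) := by
        refine Finset.sum_le_sum fun i _ => Finset.sum_le_sum fun j _ => ?_
        calc v i * A i j * v j ≤ |A i j| * (|v i| * |v j|) := by
              simpa only [abs_mul, mul_comm, mul_left_comm] using le_abs_self (v i * A i j * v j)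
          _ ≤ c * (|v i| * |v j|) := by gcongr; exact hA i j
    _ = c * (∑ i, |v i|) ^ 2 := by
        rw [sq, Finset.sum_mul_sum, Finset.mul_sum]
        simp only [Finset.mul_sum]
    _ ≤ c * Fintype.card ι := by gcongr

theorem lamMax_of_isEmpty [IsEmpty ι] (A : Matrix ι ι ℝ) : lamMax A = 0 :=
  have : IsEmpty {v : ι → ℝ // ∑ i, v i ^ 2 = 1} := ⟨fun v => by simpa using v.2⟩
  Real.iSup_of_isEmpty _

theorem bddAbove_rayleigh (A : Matrix ι ι ℝ) :
    BddAbove (Set.range fun v : {v : ι → ℝ // ∑ i, v i ^ 2 = 1} =>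
      v.1 ⬝ᵥ A *ᵥ v.1) := by
  obtain ⟨c, hc⟩ := (Set.finite_range fun ij : ι × ι => |A ij.1 ij.2|).bddAbove
  refine ⟨c * Fintype.card ι, ?_⟩
  rintro _ ⟨v, rfl⟩
  exact dotProduct_mulVec_le_mul_card (fun i j => hc ⟨(i, j), rfl⟩) v.2

theorem le_lamMax (A : Matrix ι ι ℝ) {v : ι → ℝ} (hv : ∑ i, v i ^ 2 = 1) :
    v ⬝ᵥ A *ᵥ v ≤ lamMax A :=
  le_ciSup (bddAbove_rayleigh A) ⟨v, hv⟩

theorem lamMax_add_le (A B : Matrix ι ι ℝ) : lamMax (A + B) ≤ lamMax A + lamMax B := by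
  cases isEmpty_or_nonempty {v : ι → ℝ // ∑ i, v i ^ 2 = 1} with
  | inl _ => simp [lamMax]
  | inr _ =>
    refine ciSup_le fun v => ?_
    rw [add_mulVec, dotProduct_add]
    exact add_le_add (le_lamMax A v.2) (le_lamMax B v.2)

theorem lamMax_le_mul_card {A : Matrix ι ι ℝ} {c : ℝ} (hA : ∀ i j, |A i j| ≤ c) :
    lamMax A ≤ c * Fintype.card ι := by
  refine Real.iSup_le (fun v => dotProduct_mulVec_le_mul_card hA v.2) ?_
  cases isEmpty_or_nonempty ι with
  | inl _ => simp
  | inr _ =>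
    have hc : 0 ≤ c := (abs_nonneg _).trans (hA (Classical.arbitrary ι) (Classical.arbitrary ι))
    positivity

theorem exists_le_abs_sub_of_add_le_lamMax {A B : Matrix ι ι ℝ} {τ ε : ℝ} (hε : 0 < ε)
    (hB : lamMax B ≤ τ) (hA : τ + ε ≤ lamMax A) :
    ∃ i j, ε / Fintype.card ι ≤ |A i j - B i j| := by
  by_contra! hsmall
  cases isEmpty_or_nonempty ι with
  | inl _ =>
    rw [lamMax_of_isEmpty] at hA hB
    linarith
  | inr _ =>
    obtain ⟨⟨i₀, j₀⟩, hmax⟩ :=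
      Finite.exists_max fun ij : ι × ι => |A ij.1 ij.2 - B ij.1 ij.2|
    have hcard : (0 : ℝ) < Fintype.card ι := Nat.cast_pos.mpr Fintype.card_pos
    have hdiff : lamMax (A - B) ≤ |A i₀ j₀ - B i₀ j₀| * Fintype.card ι :=
      lamMax_le_mul_card fun i j => hmax (i, j)
    have hlt : |A i₀ j₀ - B i₀ j₀| * Fintype.card ι < ε := by
      have := hsmall i₀ j₀
      rwa [lt_div_iff₀ hcard] at this
    have := lamMax_add_le B (A - B)
    rw [add_sub_cancel] at this
    linarith

end RayleighQuotient

section Ising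

variable {p : ℕ}

theorem isingPmf_nonneg (θ : PairIdx p → ℝ) (x : Fin p → Bool) : 0 ≤ isingPmf θ x := by
  unfold isingPmf
  positivity

theorem sum_isingPmf (θ : PairIdx p → ℝ) : ∑ x, isingPmf θ x = 1 := by
  have hZ : 0 < ∑ y : Fin p → Bool, Real.exp (isingEnergy θ y) :=
    Finset.sum_pos (fun y _ => Real.exp_pos _) Finset.univ_nonempty
  simp only [isingPmf, ← Finset.sum_div, div_self hZ.ne']

theorem toR_mem_Icc (b : Bool) : toR b ∈ Set.Icc (0 : ℝ) 1 := by
  cases b <;> simp [toR]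

theorem designMat_mem_Icc (x : Fin p → Bool) (j : Fin p) (e : PairIdx p) :
    designMat x j e ∈ Set.Icc (0 : ℝ) 1 := by
  simp only [designMat, of_apply]
  split_ifs <;> first | exact toR_mem_Icc _ | simp

theorem sum_designMat (x : Fin p → Bool) (e : PairIdx p) :
    ∑ j, designMat x j e = toR (x e.1.2) + toR (x e.1.1) := by
  have hne : e.1.2 ≠ e.1.1 := e.2.ne'
  simp [designMat, Finset.sum_ite, Finset.filter_ne', Finset.filter_eq', hne]

theorem gram_designMat_mem_Icc (x : Fin p → Bool) (e e' : PairIdx p) :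
    ((designMat x)ᵀ * designMat x) e e' ∈ Set.Icc (0 : ℝ) 2 := by
  have hD := designMat_mem_Icc x
  rw [mul_apply]
  refine ⟨Finset.sum_nonneg fun j _ => mul_nonneg (hD j e).1 (hD j e').1, ?_⟩
  calc ∑ j, (designMat x)ᵀ e j * designMat x j e' ≤ ∑ j, designMat x j e :=
        Finset.sum_le_sum fun j _ => mul_le_of_le_one_right (hD j e).1 (hD j e').2
    _ ≤ 2 := by
        rw [sum_designMat]
        linarith [(toR_mem_Icc (x e.1.2)).2, (toR_mem_Icc (x e.1.1)).2]

theorem Upop_apply (θ : PairIdx p → ℝ) (e e' : PairIdx p) :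
    Upop θ e e' = ∑ x, isingPmf θ x * ((designMat x)ᵀ * designMat x) e e' := by
  simp [Upop, Matrix.sum_apply]

theorem Uhat_apply {n : ℕ} (xs : Fin n → Fin p → Bool) (e e' : PairIdx p) :
    Uhat xs e e' = (n : ℝ)⁻¹ * ∑ i, ((designMat (xs i))ᵀ * designMat (xs i)) e e' := by
  simp [Uhat, Matrix.sum_apply]

theorem finProb_abs_Uhat_sub_Upop_ge_le (θ : PairIdx p → ℝ) {n : ℕ} (hn : 0 < n)
    (e e' : PairIdx p) {t : ℝ} (ht : 0 ≤ t) :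
    finProb (fun xs : Fin n → Fin p → Bool => ∏ i, isingPmf θ (xs i))
        {xs | t ≤ |Uhat xs e e' - Upop θ e e'|}
      ≤ 2 * Real.exp (-(n * t ^ 2 / 2)) := by
  have h := finProb_abs_mean_sub_ge_le (isingPmf_nonneg θ) (sum_isingPmf θ) two_pos
    (fun x => gram_designMat_mem_Icc x e e') hn ht
  simp only [← Uhat_apply, ← Upop_apply] at h
  convert h using 3
  ring

end Ising

theorem sq_mul_exp_le_exp_add_two_log {q : ℝ} (hq : 0 ≤ q) (n ε : ℝ) :
    q ^ 2 * (2 * Real.exp (-(n * (ε / q) ^ 2 / 2)))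
      ≤ 2 * Real.exp (-(ε ^ 2 / 2) * (n / q ^ 2) + 2 * Real.log q) := by
  rcases hq.eq_or_lt with rfl | hq
  · simp only [ne_eq, OfNat.ofNat_ne_zero, not_false_eq_true, zero_pow, zero_mul]
    positivity
  · have hlog : 2 * Real.log q = Real.log (q ^ 2) := by rw [Real.log_pow]; norm_num
    have hexp : -(n * (ε / q) ^ 2 / 2) = -(ε ^ 2 / 2) * (n / q ^ 2) := by ring
    rw [Real.exp_add, hlog, Real.exp_log (by positivity), hexp]
    apply le_of_eq
    ring

theorem stmt_6_general (p nkk : ℕ) (hnk : 1 ≤ nkk)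
    (θb : PairIdx p → ℝ) (τmax : ℝ)
    (condB : lamMax (subm (Upop θb) (suppF θb) (suppF θb)) ≤ τmax)
    (ε : ℝ) (hε : 0 < ε) :
    finProb (fun xs : Fin nkk → Fin p → Bool => ∏ i, isingPmf θb (xs i))
        {xs | τmax + ε ≤ lamMax (subm (Uhat xs) (suppF θb) (suppF θb))}
      ≤ 2 * Real.exp (-(ε ^ 2 / 2) * ((nkk : ℝ) / ((suppF θb).card : ℝ) ^ 2)
          + 2 * Real.log ((suppF θb).card : ℝ)) := by
  set S := suppF θb
  have hcover : {xs : Fin nkk → Fin p → Bool | τmax + ε ≤ lamMax (subm (Uhat xs) S S)}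
      ⊆ ⋃ ee : S × S, {xs | ε / S.card ≤ |Uhat xs ee.1 ee.2 - Upop θb ee.1 ee.2|} := by
    intro xs hxs
    obtain ⟨e, e', he⟩ := exists_le_abs_sub_of_add_le_lamMax hε condB hxs
    rw [Fintype.card_coe] at he
    exact Set.mem_iUnion.mpr ⟨(e, e'), he⟩
  calc _ ≤ ∑ ee : S × S,
        finProb (fun xs : Fin nkk → Fin p → Bool => ∏ i, isingPmf θb (xs i))
          {xs | ε / S.card ≤ |Uhat xs ee.1 ee.2 - Upop θb ee.1 ee.2|} :=
        finProb_le_sum_of_subset_iUnion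
          (fun xs => Finset.prod_nonneg fun i _ => isingPmf_nonneg θb _) hcover
    _ ≤ ∑ _ee : S × S, 2 * Real.exp (-(nkk * (ε / S.card) ^ 2 / 2)) :=
        Finset.sum_le_sum fun ee _ =>
          finProb_abs_Uhat_sub_Upop_ge_le θb hnk ee.1 ee.2 (by positivity)
    _ = (S.card : ℝ) ^ 2 * (2 * Real.exp (-(nkk * (ε / S.card) ^ 2 / 2))) := by
        simp [Finset.sum_const, Fintype.card_coe, sq]
    _ ≤ _ := sq_mul_exp_le_exp_add_two_log (Nat.cast_nonneg _) _ _

/-- Proposition A.2(ii): concentration of the maximum eigenvalue of the sample moment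
matrix of a single category of i.i.d. Ising data. -/
theorem stmt_6 (p nkk : ℕ) (hp : 1 ≤ p) (hnk : 1 ≤ nkk)
    (θb : PairIdx p → ℝ) (τmax : ℝ) (hτmax : 0 < τmax)
    (condB : lamMax (subm (Upop θb) (suppF θb) (suppF θb)) ≤ τmax)
    (ε : ℝ) (hε : 0 < ε) :
    finProb (fun xs : Fin nkk → Fin p → Bool => ∏ i, isingPmf θb (xs i))
        {xs | τmax + ε ≤ lamMax (subm (Uhat xs) (suppF θb) (suppF θb))}
      ≤ 2 * Real.exp (-(ε ^ 2 / 2) * ((nkk : ℝ) / ((suppF θb).card : ℝ) ^ 2)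
          + 2 * Real.log ((suppF θb).card : ℝ)) :=
  stmt_6_general p nkk hnk θb τmax condB ε hε
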